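/- Let β > 1, ξ > (β e^{e+1})^{-1/(β-1)}, f(x) = sgn(x)|x|^β, and g(t) = ξ^β/log₂(t+e^e) - (ξ/β)·(log₂(t+e^e))^{-1-1/β}·((t+e^e)·log(t+e^e))^{-1} for t ≥ 0, where log₂ = log∘log denotes the iterated logarithm; the restriction on ξ ensures g(t) > 0 for all t ≥ 0. Then x(t) = ξ/(log₂(t+e^e))^{1/β} is the unique continuous solution of x'(t) = -f(x(t)) + g(t), t > 0, x(0) = ξ/(log₂(e^e))^{1/β}; moreover lim_{t→∞} g(t)/(ξ^β/log₂(t+e^e)) = 1 and lim_{t→∞} f(x(t))/g(t) = 1. -/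

import Mathlib

/-!
The candidate `x` is explicit and `g = f(x) + x'` by direct differentiation, so `x` solves the
equation. Since `f` is increasing, `(y - x)²` is nonincreasing for any two solutions `x`, `y`,
which gives uniqueness. Finally `f(x(t)) = ξ^β / log₂ u` and `g(t) = (ξ^β / log₂ u)(1 - r(u))`
with `u = t + e^e`, where `r(u) → 0`; the lower bound on `ξ` together with `log₂ u ≥ 1` and
`u log u ≥ e^{e+1}` is exactly what makes `r < 1`, i.e. `g > 0`.
-/

open Filter Real Set Topology MeasureTheory

noncomputable section

/-- A function `f : (0,∞) → (0,∞)` is regularly varying at `0` with index `β` if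
`f(λx)/f(x) → λ^β` as `x → 0⁺` for every `λ > 0`. -/
def RVat0 (f : ℝ → ℝ) (β : ℝ) : Prop :=
  ∀ lam : ℝ, 0 < lam →
    Tendsto (fun x => f (lam * x) / f x) (nhdsWithin 0 (Set.Ioi 0)) (nhds (lam ^ β))

/-- A function `h : (0,∞) → (0,∞)` is regularly varying at `∞` with index `α` if
`h(λt)/h(t) → λ^α` as `t → ∞` for every `λ > 0`. -/
def RVatInf (h : ℝ → ℝ) (α : ℝ) : Prop :=
  ∀ lam : ℝ, 0 < lam →
    Tendsto (fun t => h (lam * t) / h t) atTop (nhds (lam ^ α))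

/-- A continuous solution of the perturbed ODE `x'(t) = -f(x(t)) + g(t)`, `t > 0`,
with initial condition `x(0) = ξ`. -/
def IsSol (f g : ℝ → ℝ) (ξ : ℝ) (x : ℝ → ℝ) : Prop :=
  ContinuousOn x (Set.Ici 0) ∧ x 0 = ξ ∧
    ∀ t : ℝ, 0 < t → HasDerivAt x (-f (x t) + g t) t

theorem monotone_sign_mul_abs_rpow {β : ℝ} (hβ : 0 ≤ β) :
    Monotone fun y : ℝ => Real.sign y * |y| ^ β := by
  refine monotone_of_odd_of_monotoneOn_nonneg (fun y => by simp [Real.sign_neg]) ?_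
  intro a ha b hb hab
  dsimp only
  rcases (mem_Ici.mp ha).eq_or_lt with rfl | ha'
  · rcases (mem_Ici.mp hb).eq_or_lt with rfl | hb'
    · rfl
    · simpa [Real.sign_of_pos hb'] using rpow_nonneg (abs_nonneg b) β
  · rw [Real.sign_of_pos ha', Real.sign_of_pos (ha'.trans_le hab), abs_of_pos ha',
      abs_of_pos (ha'.trans_le hab), one_mul, one_mul]
    exact rpow_le_rpow ha'.le hab hβ

theorem IsSol.eqOn_of_monotone {f g x y : ℝ → ℝ} {ξ : ℝ} (hf : Monotone f)
    (hx : IsSol f g ξ x) (hy : IsSol f g ξ y) : ∀ t, 0 ≤ t → y t = x t := by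
  obtain ⟨hxc, hx0, hxd⟩ := hx
  obtain ⟨hyc, hy0, hyd⟩ := hy
  have hd : ∀ s ∈ interior (Ici (0:ℝ)), HasDerivAt (fun s => (y s - x s) ^ 2)
      (2 * (y s - x s) * (f (x s) - f (y s))) s := by
    rw [interior_Ici]
    intro s hs
    exact (((hyd s hs).fun_sub (hxd s hs)).fun_pow 2).congr_deriv (by push_cast; ring)
  have hanti : AntitoneOn (fun s => (y s - x s) ^ 2) (Ici 0) := by
    refine antitoneOn_of_hasDerivWithinAt_nonpos (convex_Ici 0) ((hyc.sub hxc).pow 2)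
      (fun s hs => (hd s hs).hasDerivWithinAt) fun s _ => ?_
    rcases le_total (x s) (y s) with h | h
    · nlinarith [hf h]
    · nlinarith [hf h]
  intro t ht
  have : (y t - x t) ^ 2 ≤ (y 0 - x 0) ^ 2 := hanti self_mem_Ici ht ht
  rw [hy0, hx0, sub_self] at this
  nlinarith [sq_nonneg (y t - x t)]

theorem isSol_of_eqOn_of_hasDerivAt {f g x X : ℝ → ℝ} (hxX : EqOn x X (Ici 0))
    (hX : ∀ t, 0 ≤ t → HasDerivAt X (-f (x t) + g t) t) : IsSol f g (X 0) x := by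
  refine ⟨ContinuousOn.congr (fun t ht => (hX t ht).continuousAt.continuousWithinAt) hxX,
    hxX self_mem_Ici, fun t ht => (hX t ht.le).congr_of_eventuallyEq ?_⟩
  filter_upwards [lt_mem_nhds ht] with s hs using hxX (le_of_lt hs)

theorem sign_mul_abs_rpow_div_rpow_one_div {ξ L β : ℝ} (hξ : 0 < ξ) (hL : 0 < L) (hβ : β ≠ 0) :
    Real.sign (ξ / L ^ (1 / β)) * |ξ / L ^ (1 / β)| ^ β = ξ ^ β / L := by
  have hx : 0 < ξ / L ^ (1 / β) := div_pos hξ (rpow_pos_of_pos hL _)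
  rw [Real.sign_of_pos hx, one_mul, abs_of_pos hx, div_rpow hξ.le (rpow_nonneg hL.le _),
    ← rpow_mul hL.le, one_div_mul_cancel hβ, rpow_one]

theorem rpow_neg_lt_of_rpow_neg_one_div_lt {c ξ p : ℝ} (hc : 0 < c) (hp : 0 < p)
    (h : c ^ (-(1 / p)) < ξ) : ξ ^ (-p) < c :=
  calc ξ ^ (-p) < (c ^ (-(1 / p))) ^ (-p) :=
        rpow_lt_rpow_of_neg (rpow_pos_of_pos hc _) h (neg_lt_zero.mpr hp)
    _ = c := by rw [← rpow_mul hc.le, neg_mul_neg, one_div_mul_cancel hp.ne', rpow_one]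

theorem exp_one_le_log {u : ℝ} (hu : exp (exp 1) ≤ u) : exp 1 ≤ log u :=
  (le_log_iff_exp_le ((exp_pos _).trans_le hu)).mpr hu

theorem one_le_log_log {u : ℝ} (hu : exp (exp 1) ≤ u) : 1 ≤ log (log u) :=
  (le_log_iff_exp_le ((exp_pos 1).trans_le (exp_one_le_log hu))).mpr (exp_one_le_log hu)

theorem exp_add_one_le_mul_log {u : ℝ} (hu : exp (exp 1) ≤ u) :
    exp (exp 1 + 1) ≤ u * log u := by
  rw [exp_add]
  exact mul_le_mul hu (exp_one_le_log hu) (exp_pos 1).le ((exp_pos _).le.trans hu)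

theorem hasDerivAt_div_log_log_rpow (ξ β : ℝ) {u : ℝ} (hu : exp 1 < u) :
    HasDerivAt (fun u => ξ / log (log u) ^ (1 / β))
      (-(ξ / β * log (log u) ^ (-1 - 1 / β) * (1 / (u * log u)))) u := by
  have hu0 : 0 < u := (exp_pos 1).trans hu
  have hlog : 1 < log u := (lt_log_iff_exp_lt hu0).mpr hu
  have hL : 0 < log (log u) := log_pos hlog
  have hderiv := (((hasDerivAt_log hu0.ne').log (by linarith)).rpow_const
    (p := -(1 / β)) (Or.inl hL.ne')).const_mul ξ
  have heq : (fun u => ξ * log (log u) ^ (-(1 / β))) =ᶠ[𝓝 u]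
      fun u => ξ / log (log u) ^ (1 / β) := by
    filter_upwards [lt_mem_nhds hu] with v hv
    have : 0 ≤ log (log v) :=
      log_nonneg ((le_log_iff_exp_le ((exp_pos 1).trans hv)).mpr hv.le)
    rw [rpow_neg this, ← div_eq_mul_inv]
  refine (hderiv.congr_of_eventuallyEq heq.symm).congr_deriv ?_
  rw [show -(1 / β) - 1 = -1 - 1 / β by ring]
  field_simp

/-- `g(t) = (ξ^β / log₂ u) (1 - loglogCorrection ξ β u)` with `u = t + e^e`. -/
def loglogCorrection (ξ β u : ℝ) : ℝ :=
  ξ ^ (1 - β) / β * log (log u) ^ (-(1 / β)) / (u * log u)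

theorem rpow_div_log_log_sub_eq_mul_one_sub_loglogCorrection {ξ β u : ℝ} (hξ : 0 < ξ)
    (hβ : β ≠ 0) (hu : exp (exp 1) ≤ u) :
    ξ ^ β / log (log u) - ξ / β * log (log u) ^ (-1 - 1 / β) * (1 / (u * log u)) =
      ξ ^ β / log (log u) * (1 - loglogCorrection ξ β u) := by
  have hL : 0 < log (log u) := one_pos.trans_le (one_le_log_log hu)
  rw [loglogCorrection, sub_eq_add_neg (-1), rpow_add hL, rpow_neg_one, rpow_sub hξ, rpow_one]
  field_simp

theorem loglogCorrection_lt_one {ξ β u : ℝ} (hβ : 1 < β)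
    (hξ : (β * exp (exp 1 + 1)) ^ (-(1 / (β - 1))) < ξ) (hu : exp (exp 1) ≤ u) :
    loglogCorrection ξ β u < 1 := by
  have hβ0 : 0 < β := one_pos.trans hβ
  have hc : 0 < β * exp (exp 1 + 1) := by positivity
  have hξβ : ξ ^ (1 - β) < β * exp (exp 1 + 1) := by
    simpa only [neg_sub] using rpow_neg_lt_of_rpow_neg_one_div_lt hc (sub_pos.mpr hβ) hξ
  have hξ0 : 0 < ξ := (rpow_pos_of_pos hc _).trans hξ
  calc loglogCorrection ξ β u ≤ ξ ^ (1 - β) / β * 1 / exp (exp 1 + 1) := by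
        unfold loglogCorrection
        gcongr
        · exact rpow_le_one_of_one_le_of_nonpos (one_le_log_log hu)
            (neg_nonpos.mpr (by positivity))
        · exact exp_add_one_le_mul_log hu
    _ < 1 := by
        rw [mul_one, div_div, div_lt_one (by positivity)]
        exact hξβ

theorem tendsto_loglogCorrection_atTop (ξ : ℝ) {β : ℝ} (hβ : 0 < β) :
    Tendsto (loglogCorrection ξ β) atTop (𝓝 0) := by
  have hL : Tendsto (fun u => log (log u)) atTop atTop :=
    tendsto_log_atTop.comp tendsto_log_atTop
  have hA := ((tendsto_rpow_neg_atTop (by positivity : 0 < 1 / β)).comp hL).const_mul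
    (ξ ^ (1 - β) / β)
  rw [mul_zero] at hA
  exact hA.div_atTop (tendsto_id.atTop_mul_atTop₀ tendsto_log_atTop)

/-- Example 3.6: with `β > 1`, `ξ > (βe^{e+1})^{-1/(β-1)}`, `f(x) = sgn(x)|x|^β` and
the given slowly varying perturbation `g` (with iterated-logarithmic decay), the
function `x(t) = ξ/(log log(t+e^e))^{1/β}` is the unique continuous solution of
`x' = -f(x) + g`; moreover `g(t)/(ξ^β/ log log(t+e^e)) → 1` and `f(x(t))/g(t) → 1`. -/
theorem stmt_19 (β ξ : ℝ) (hβ : 1 < β)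
    (hξ : (β * Real.exp (Real.exp 1 + 1)) ^ (-((1:ℝ) / (β - 1))) < ξ)
    (f g x : ℝ → ℝ)
    (hf : ∀ y : ℝ, f y = Real.sign y * |y| ^ β)
    (hg : ∀ t : ℝ, 0 ≤ t → g t =
      ξ ^ β / Real.log (Real.log (t + Real.exp (Real.exp 1))) -
        (ξ / β) * (Real.log (Real.log (t + Real.exp (Real.exp 1)))) ^ (-1 - (1:ℝ)/β) *
          (1 / ((t + Real.exp (Real.exp 1)) * Real.log (t + Real.exp (Real.exp 1)))))
    (hxdef : ∀ t : ℝ, 0 ≤ t →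
      x t = ξ / (Real.log (Real.log (t + Real.exp (Real.exp 1)))) ^ ((1:ℝ)/β)) :
    (∀ t : ℝ, 0 ≤ t → 0 < g t) ∧
    IsSol f g (ξ / (Real.log (Real.log (Real.exp (Real.exp 1)))) ^ ((1:ℝ)/β)) x ∧
    (∀ y : ℝ → ℝ,
      IsSol f g (ξ / (Real.log (Real.log (Real.exp (Real.exp 1)))) ^ ((1:ℝ)/β)) y →
      ∀ t : ℝ, 0 ≤ t → y t = x t) ∧
    Tendsto (fun t => g t / (ξ ^ β / Real.log (Real.log (t + Real.exp (Real.exp 1)))))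
      atTop (nhds 1) ∧
    Tendsto (fun t => f (x t) / g t) atTop (nhds 1) := by
  have hβ0 : 0 < β := one_pos.trans hβ
  have hξ0 : 0 < ξ := (rpow_pos_of_pos (by positivity) _).trans hξ
  set E := exp (exp 1)
  have hE : ∀ t : ℝ, 0 ≤ t → E ≤ t + E := fun t ht => le_add_of_nonneg_left ht
  have he : exp 1 < E := (lt_add_one _).trans (add_one_lt_exp (exp_pos 1).ne')
  have hL : ∀ t : ℝ, 0 ≤ t → 0 < log (log (t + E)) :=
    fun t ht => one_pos.trans_le (one_le_log_log (hE t ht))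
  have hfx : ∀ t : ℝ, 0 ≤ t → f (x t) = ξ ^ β / log (log (t + E)) := fun t ht => by
    rw [hf, hxdef t ht, sign_mul_abs_rpow_div_rpow_one_div hξ0 (hL t ht) hβ0.ne']
  have hg' : ∀ t : ℝ, 0 ≤ t →
      g t = ξ ^ β / log (log (t + E)) * (1 - loglogCorrection ξ β (t + E)) := fun t ht => by
    rw [hg t ht, rpow_div_log_log_sub_eq_mul_one_sub_loglogCorrection hξ0 hβ0.ne' (hE t ht)]
  have hx' : ∀ t : ℝ, 0 ≤ t →
      HasDerivAt (fun s => ξ / log (log (s + E)) ^ (1 / β)) (-f (x t) + g t) t := fun t ht => by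
    rw [hfx t ht, hg t ht, neg_add_eq_sub, sub_sub_cancel_left]
    exact (hasDerivAt_div_log_log_rpow ξ β (he.trans_le (hE t ht))).comp_add_const t E
  have hsol : IsSol f g (ξ / log (log E) ^ (1 / β)) x := by
    simpa only [zero_add] using isSol_of_eqOn_of_hasDerivAt (fun t ht => hxdef t ht) hx'
  have hratio : Tendsto (fun t => g t / (ξ ^ β / log (log (t + E)))) atTop (𝓝 1) := by
    have hcorr := ((tendsto_loglogCorrection_atTop ξ hβ0).comp
      (tendsto_atTop_add_const_right _ E tendsto_id)).const_sub 1
    rw [sub_zero] at hcorr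
    refine hcorr.congr' ?_
    filter_upwards [eventually_ge_atTop 0] with t ht
    rw [hg' t ht, mul_div_cancel_left₀ _ (div_pos (rpow_pos_of_pos hξ0 β) (hL t ht)).ne']
    rfl
  have hfmono : Monotone f := by
    simpa only [← funext hf] using monotone_sign_mul_abs_rpow hβ0.le
  refine ⟨fun t ht => ?_, hsol, fun y hy => hsol.eqOn_of_monotone hfmono hy, hratio, ?_⟩
  · rw [hg' t ht]
    exact mul_pos (div_pos (rpow_pos_of_pos hξ0 β) (hL t ht))
      (sub_pos.mpr (loglogCorrection_lt_one hβ hξ (hE t ht)))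
  · have hinv := hratio.inv₀ one_ne_zero
    rw [inv_one] at hinv
    refine hinv.congr' ?_
    filter_upwards [eventually_ge_atTop 0] with t ht
    rw [inv_div, hfx t ht]
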